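/- arXiv:2009.13255 — 5 statements merged into one kernel-verified Lean document; each statement's English description precedes it below -/
import Mathlib

section
/- There is no smooth function f on a compact Riemannian manifold M of dimension n ≥ 1 satisfying Δf = n, where Δ is the Laplace–Beltrami operator. Consequently, any compact conformal soliton (M,g,v,φ) with a concurrent vector field v is trivial (v ≡ 0). -/
/-- Abstract data of a Riemannian manifold: points `M`, a space `VF` of (smooth) vector
fields, the action of vector fields on functions, the metric, the Levi-Civita
connection and the Lie bracket, with their defining properties. -/
structure RiemannianVF (M : Type*) (VF : Type*) [AddCommGroup VF] [Module ℝ VF] where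
  act : VF → (M → ℝ) → (M → ℝ)
  g : VF → VF → M → ℝ
  conn : VF → VF → VF
  bracket : VF → VF → VF
  g_symm : ∀ X Y, g X Y = g Y X
  g_add_left : ∀ X Y Z, g (X + Y) Z = g X Z + g Y Z
  g_smul_left : ∀ (c : ℝ) (X Z), g (c • X) Z = c • g X Z
  g_nonneg : ∀ X p, 0 ≤ g X X p
  nondeg : ∀ X, (∀ Z, g X Z = 0) → X = 0
  act_add : ∀ X (u v : M → ℝ), act X (u + v) = act X u + act X v
  compat : ∀ X Y Z, act X (g Y Z) = g (conn X Y) Z + g Y (conn X Z)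
  torsion_free : ∀ X Y, conn X Y - conn Y X = bracket X Y

namespace RiemannianVF

variable {M VF : Type*} [AddCommGroup VF] [Module ℝ VF]

/-- Lie derivative of the metric along `v`:
`(L_v g)(X,Y) = v(g(X,Y)) - g([v,X],Y) - g(X,[v,Y])`. -/
def lieDeriv (R : RiemannianVF M VF) (v X Y : VF) : M → ℝ :=
  R.act v (R.g X Y) - R.g (R.bracket v X) Y - R.g X (R.bracket v Y)

/-- `v` is the gradient of `f`: `g(v, X) = X f` for every vector field `X`. -/
def IsGradient (R : RiemannianVF M VF) (v : VF) (f : M → ℝ) : Prop :=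
  ∀ X, R.g v X = R.act X f

/-- Hessian: `(∇∇ f)(X,Y) = X(Y f) - (∇_X Y) f`. -/
def hess (R : RiemannianVF M VF) (f : M → ℝ) (X Y : VF) : M → ℝ :=
  R.act X (R.act Y f) - R.act (R.conn X Y) f

/-- Riemann curvature: `Rm(X,Y)Z = ∇_X ∇_Y Z - ∇_Y ∇_X Z - ∇_[X,Y] Z`. -/
def curv (R : RiemannianVF M VF) (X Y Z : VF) : VF :=
  R.conn X (R.conn Y Z) - R.conn Y (R.conn X Z) - R.conn (R.bracket X Y) Z

/-- `e` is a (global) orthonormal frame. -/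
def IsONFrame (R : RiemannianVF M VF) {n : ℕ} (e : Fin n → VF) : Prop :=
  ∀ i j, R.g (e i) (e j) = fun _ => if i = j then (1 : ℝ) else 0

/-- Ricci tensor: `Ric(X,Y) = Σᵢ g(Rm(eᵢ,X)Y, eᵢ)`. -/
def ricci (R : RiemannianVF M VF) {n : ℕ} (e : Fin n → VF) (X Y : VF) : M → ℝ :=
  ∑ i, R.g (R.curv (e i) X Y) (e i)

/-- Scalar curvature: trace of the Ricci tensor. -/
def scal (R : RiemannianVF M VF) {n : ℕ} (e : Fin n → VF) : M → ℝ :=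
  ∑ i, R.ricci e (e i) (e i)

/-- Laplace–Beltrami operator: trace of the Hessian. -/
def laplacian (R : RiemannianVF M VF) {n : ℕ} (e : Fin n → VF) (f : M → ℝ) : M → ℝ :=
  ∑ i, R.hess f (e i) (e i)

/-- Covariant derivative of a one-form: `(∇_X ω)(Y) = X(ω(Y)) - ω(∇_X Y)`. -/
def covDerivOneForm (R : RiemannianVF M VF) (ω : VF → M → ℝ) (X Y : VF) : M → ℝ :=
  R.act X (ω Y) - ω (R.conn X Y)

/-- Second covariant derivative of a one-form. -/
def covDeriv2OneForm (R : RiemannianVF M VF) (ω : VF → M → ℝ) (X Y Z : VF) : M → ℝ :=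
  R.act X (R.covDerivOneForm ω Y Z) - R.covDerivOneForm ω (R.conn X Y) Z
    - R.covDerivOneForm ω Y (R.conn X Z)

/-- Connection (rough) Laplacian on one-forms: trace of the second covariant derivative. -/
def roughLapOneForm (R : RiemannianVF M VF) {n : ℕ} (e : Fin n → VF) (ω : VF → M → ℝ)
    (X : VF) : M → ℝ :=
  ∑ i, R.covDeriv2OneForm ω (e i) (e i) X

end RiemannianVF

/-- on a compact Riemannian manifold of dimension `n ≥ 1` (compactness is
encoded by an integral `I` with the divergence theorem `I (Δ f) = 0` and positive total
volume) there is no smooth function with `Δ f = n`; consequently any compact conformal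
soliton with a concurrent vector field is trivial. -/
theorem no_laplacian_eq_dim_and_compact_soliton_trivial {M VF : Type*}
    [AddCommGroup VF] [Module ℝ VF]
    (R : RiemannianVF M VF) (n : ℕ) (hn : 1 ≤ n) (e : Fin n → VF)
    (he : R.IsONFrame e)
    (I : (M → ℝ) → ℝ)
    (hI_div : ∀ f : M → ℝ, I (R.laplacian e f) = 0)
    (hI_vol : 0 < I (fun _ => 1))
    (hI_lin : ∀ (c : ℝ) (f : M → ℝ), I (fun p => c * f p) = c * I f) :
    (¬ ∃ f : M → ℝ, R.laplacian e f = fun _ => (n : ℝ)) ∧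
      (∀ (v : VF) (φ : M → ℝ),
        (∀ X, R.conn X v = X) →
        (∀ X Y : VF, (fun p => φ p * R.g X Y p) = fun p => (1 / 2) * R.lieDeriv v X Y p) →
        v = 0) := by
  have hn' : (0:ℝ) < n := by exact_mod_cast Nat.lt_of_lt_of_le Nat.zero_lt_one hn
  constructor
  · rintro ⟨f, hf⟩
    have h0 := hI_div f
    rw [hf] at h0
    have h2 : I (fun _ : M => (n:ℝ)) = n * I (fun _ => 1) := by
      simpa using hI_lin n (fun _ => 1)
    nlinarith [hI_vol]
  · intro v φ hconc _
    exfalso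
    have hhess : ∀ X, R.hess (R.g v v) X X = R.g X X + R.g X X := by
      intro X
      unfold RiemannianVF.hess
      have h1 : R.act X (R.g v v) = R.g X v + R.g v X := by
        rw [R.compat X v v, hconc X]
      rw [h1, R.act_add, R.compat X X v, R.compat X v X, hconc X,
        R.compat (R.conn X X) v v, hconc (R.conn X X)]
      funext p
      simp only [Pi.add_apply, Pi.sub_apply]
      ring
    have hlap : R.laplacian e (R.g v v) = fun _ => (2 * n : ℝ) := by
      unfold RiemannianVF.laplacian
      funext p
      rw [Finset.sum_apply]
      have hterm : ∀ i ∈ Finset.univ, R.hess (R.g v v) (e i) (e i) p = 2 := by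
        intro i _
        rw [hhess (e i)]
        simp [he i i]
        norm_num
      rw [Finset.sum_congr rfl hterm]
      simp [mul_comm]
    have h0 := hI_div (R.g v v)
    rw [hlap] at h0
    have h2 : I (fun _ : M => (2 * n : ℝ)) = (2 * n) * I (fun _ => 1) := by
      simpa using hI_lin (2 * n) (fun _ => 1)
    nlinarith [hI_vol]
end

section
/- Let M be a submanifold of a Riemannian manifold (N, g̃) carrying a concurrent vector field V (∇̃_X V = X for all X tangent to N). Decompose V = V^T + V^⊥ into tangential and normal components along M. If (M, g, V^T, φ) is a conformal soliton, then for all vector fields X, Y tangent to M: (φ - 1) g(X,Y) = g(A_{V^⊥}(X), Y), where A_{V^⊥} is the shape operator of M in direction V^⊥. -/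
/-- A submanifold `M` of an ambient Riemannian manifold: `VF` are ambient vector
fields along `M`, `T` is the orthogonal projection onto the tangent bundle of `M`. -/
structure SubmanifoldVF (M : Type*) (VF : Type*) [AddCommGroup VF] [Module ℝ VF]
    extends RiemannianVF M VF where
  T : VF →ₗ[ℝ] VF
  T_proj : ∀ X, T (T X) = T X
  T_orth : ∀ X Y, g (T X) (Y - T Y) = 0
  bracket_tangent : ∀ X Y, T X = X → T Y = Y → T (bracket X Y) = bracket X Y

namespace SubmanifoldVF

variable {M VF : Type*} [AddCommGroup VF] [Module ℝ VF]

/-- Normal component of an ambient vector field along `M`. -/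
def nor (S : SubmanifoldVF M VF) (X : VF) : VF := X - S.T X

/-- Shape operator `A_η` in a normal direction `η` (Weingarten: tangential part of `-∇̃_X η`). -/
def shape (S : SubmanifoldVF M VF) (η X : VF) : VF := - S.T (S.conn X η)

/-- Second fundamental form: normal component of `∇̃_X Y`. -/
def secondFF (S : SubmanifoldVF M VF) (X Y : VF) : VF := S.conn X Y - S.T (S.conn X Y)

/-- Hessian on `M` with respect to the induced connection `∇_X Y = (∇̃_X Y)^T`. -/
def hessInduced (S : SubmanifoldVF M VF) (f : M → ℝ) (X Y : VF) : M → ℝ :=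
  S.act X (S.act Y f) - S.act (S.T (S.conn X Y)) f

/-- Laplace–Beltrami operator of `M` with respect to a tangent orthonormal frame. -/
def lapInduced (S : SubmanifoldVF M VF) {n : ℕ} (e : Fin n → VF) (f : M → ℝ) : M → ℝ :=
  ∑ i, S.hessInduced f (e i) (e i)

/-- `(M, g, v, φ)` is a conformal soliton: `φ g = (1/2) L_v g` on tangent vector fields. -/
def IsConformalSoliton (S : SubmanifoldVF M VF) (v : VF) (φ : M → ℝ) : Prop :=
  ∀ X Y, S.T X = X → S.T Y = Y →
    (fun p => φ p * S.g X Y p) = fun p => (1 / 2) * S.toRiemannianVF.lieDeriv v X Y p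

end SubmanifoldVF

/-- if `V` is concurrent in the ambient manifold and `(M, g, V^T, φ)` is a
conformal soliton, then `(φ - 1) g(X,Y) = g(A_{V^⊥} X, Y)` for tangent `X, Y`. -/
theorem soliton_shape_identity {M VF : Type*} [AddCommGroup VF] [Module ℝ VF]
    (S : SubmanifoldVF M VF) (V : VF) (φ : M → ℝ)
    (hV : ∀ X, S.T X = X → S.conn X V = X)
    (hsol : S.IsConformalSoliton (S.T V) φ) :
    ∀ X Y, S.T X = X → S.T Y = Y →
      ∀ p, (φ p - 1) * S.g X Y p = S.g (S.shape (S.nor V) X) Y p := by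
  intro X Y hX hY p
  -- basic algebraic lemmas for the metric
  have gnl : ∀ A B : VF, S.g (-A) B = - S.g A B := fun A B => by
    simpa [neg_one_smul] using S.g_smul_left (-1) A B
  have gsl : ∀ A B C : VF, S.g (A - B) C = S.g A C - S.g B C := fun A B C => by
    rw [sub_eq_add_neg, S.g_add_left, gnl, ← sub_eq_add_neg]
  have gsr : ∀ A B C : VF, S.g A (B - C) = S.g A B - S.g A C := fun A B C => by
    rw [S.g_symm A (B - C), gsl, S.g_symm B A, S.g_symm C A]
  have actz : ∀ Z : VF, S.act Z (0 : M → ℝ) = 0 := fun Z => by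
    have h := S.act_add Z 0 0
    rw [add_zero] at h
    exact (left_eq_add.mp h)
  -- the normal part of V is orthogonal to tangent fields
  have tan0 : ∀ Z : VF, S.T Z = Z → S.g (S.nor V) Z = 0 := fun Z hZ => by
    have h := S.T_orth Z V
    rw [hZ] at h
    rw [S.g_symm]
    exact h
  -- pairing with a tangent field sees only the tangential part
  have proj : ∀ U Z : VF, S.T Z = Z → S.g U Z = S.g (S.T U) Z := fun U Z hZ => by
    have h := S.T_orth Z U
    rw [hZ, gsr] at h
    have h2 : S.g Z U = S.g Z (S.T U) := sub_eq_zero.mp h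
    rw [S.g_symm U Z, h2, S.g_symm]
  -- shape operator pairing
  have shape_eq : ∀ A B : VF, S.T B = B →
      S.g (S.shape (S.nor V) A) B = - S.g (S.conn A (S.nor V)) B := fun A B hB => by
    show S.g (-(S.T (S.conn A (S.nor V)))) B = _
    rw [gnl, ← proj _ _ hB]
  -- metric compatibility with the zero function g(norV, B)
  have comp0 : ∀ A B : VF, S.T B = B →
      S.g (S.conn A (S.nor V)) B = - S.g (S.nor V) (S.conn A B) := fun A B hB => by
    have h := S.compat A (S.nor V) B
    rw [tan0 B hB, actz] at h
    exact eq_neg_of_add_eq_zero_left h.symm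
  -- decomposition of V
  have hVeq : V = S.T V + S.nor V := by
    show V = S.T V + (V - S.T V); abel
  have decV : ∀ Z : VF, S.g V Z = S.g (S.T V) Z + S.g (S.nor V) Z := fun Z => by
    have h := S.g_add_left (S.T V) (S.nor V) Z
    rw [← hVeq] at h
    exact h
  -- g-level additivity of the connection along the decomposition of V
  have conn_dec : ∀ A B : VF, S.g (S.conn A V) B =
      S.g (S.conn A (S.T V)) B + S.g (S.conn A (S.nor V)) B := fun A B => by
    have h1 := S.compat A V B
    have h2 := S.compat A (S.T V) B
    have h3 := S.compat A (S.nor V) B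
    have h4 : S.act A (S.g V B) = S.act A (S.g (S.T V) B) + S.act A (S.g (S.nor V) B) := by
      rw [decV B, S.act_add]
    have h5 := decV (S.conn A B)
    funext q
    have e1 := congrFun h1 q
    have e2 := congrFun h2 q
    have e3 := congrFun h3 q
    have e4 := congrFun h4 q
    have e5 := congrFun h5 q
    simp only [Pi.add_apply] at e1 e2 e3 e4 e5 ⊢
    linarith
  -- symmetry of the second fundamental form pairing
  have symm_conn : S.g (S.nor V) (S.conn X Y) = S.g (S.nor V) (S.conn Y X) := by
    have ht := S.torsion_free X Y
    have hb := S.bracket_tangent X Y hX hY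
    have h0 : S.g (S.nor V) (S.bracket X Y) = 0 := tan0 _ hb
    have hh := gsr (S.nor V) (S.conn X Y) (S.conn Y X)
    rw [ht, h0] at hh
    exact sub_eq_zero.mp hh.symm
  -- expand bracket terms
  have b1 : S.g (S.bracket (S.T V) X) Y
      = S.g (S.conn (S.T V) X) Y - S.g (S.conn X (S.T V)) Y := by
    rw [← S.torsion_free, gsl]
  have b2 : S.g X (S.bracket (S.T V) Y)
      = S.g (S.conn (S.T V) Y) X - S.g (S.conn Y (S.T V)) X := by
    rw [S.g_symm, ← S.torsion_free, gsl]
  -- key identities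
  have k1 : S.g (S.conn X (S.T V)) Y p = S.g X Y p - S.g (S.conn X (S.nor V)) Y p := by
    have h := conn_dec X Y
    rw [hV X hX] at h
    have := congrFun h p
    simp only [Pi.add_apply] at this
    linarith
  have k2 : S.g (S.conn Y (S.T V)) X p = S.g Y X p - S.g (S.conn Y (S.nor V)) X p := by
    have h := conn_dec Y X
    rw [hV Y hY] at h
    have := congrFun h p
    simp only [Pi.add_apply] at this
    linarith
  have s1 : S.g (S.shape (S.nor V) X) Y p = - S.g (S.conn X (S.nor V)) Y p := by
    have := congrFun (shape_eq X Y hY) p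
    simpa using this
  have s2 : S.g (S.conn X (S.nor V)) Y p = - S.g (S.nor V) (S.conn X Y) p := by
    have := congrFun (comp0 X Y hY) p
    simpa using this
  have s3 : S.g (S.conn Y (S.nor V)) X p = - S.g (S.nor V) (S.conn Y X) p := by
    have := congrFun (comp0 Y X hX) p
    simpa using this
  have s4 := congrFun symm_conn p
  -- soliton equation at p
  have hs := congrFun (hsol X Y hX hY) p
  have hlie : S.toRiemannianVF.lieDeriv (S.T V) X Y p =
      S.act (S.T V) (S.g X Y) p - S.g (S.bracket (S.T V) X) Y p
        - S.g X (S.bracket (S.T V) Y) p := rfl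
  have c1 := congrFun (S.compat (S.T V) X Y) p
  have b1' := congrFun b1 p
  have b2' := congrFun b2 p
  simp only [Pi.add_apply, Pi.sub_apply] at c1 b1' b2'
  have gsym1 := congrFun (S.g_symm Y X) p
  have gsym2 := congrFun (S.g_symm X (S.conn (S.T V) Y)) p
  have expand : (φ p - 1) * S.g X Y p = φ p * S.g X Y p - S.g X Y p := by ring
  rw [expand]
  rw [hlie] at hs
  linarith
end

section
/- Let M be a submanifold of a Riemannian manifold (N, g̃) with concurrent vector field V. Then the tangential component V^T of V along M equals the gradient (with respect to the induced metric) of the function f = (1/2) g̃(V, V) restricted to M. In particular, any conformal soliton (M, g, V^T, φ) is a conformal gradient soliton. -/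
/-- for a submanifold of an ambient manifold with concurrent vector field `V`,
the tangential part `V^T` is the gradient (w.r.t. the induced metric) of
`f = (1/2) g̃(V,V)`; in particular any conformal soliton `(M,g,V^T,φ)` is a conformal
gradient soliton. -/
theorem tangential_part_is_gradient {M VF : Type*} [AddCommGroup VF] [Module ℝ VF]
    (S : SubmanifoldVF M VF) (V : VF)
    (hV : ∀ X, S.T X = X → S.conn X V = X) :
    (∀ X, S.T X = X → S.g (S.T V) X = S.act X (fun p => (1 / 2) * S.g V V p)) ∧
      (∀ φ : M → ℝ, S.IsConformalSoliton (S.T V) φ →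
        ∃ f : M → ℝ, ∀ X, S.T X = X → S.g (S.T V) X = S.act X f) := by
  have key : ∀ X, S.T X = X → S.g (S.T V) X = S.act X (fun p => (1 / 2) * S.g V V p) := by
    intro X hX
    set h : M → ℝ := fun p => (1 / 2) * S.g V V p with hh
    have h2 : h + h = S.g V V := by
      funext p; simp [hh]; ring
    have hact : S.act X h + S.act X h = S.act X (S.g V V) := by
      rw [← S.act_add, h2]
    have hcompat : S.act X (S.g V V) = S.g (S.conn X V) V + S.g V (S.conn X V) :=
      S.compat X V V
    rw [hV X hX] at hcompat
    have hgXV : S.act X (S.g V V) = S.g V X + S.g V X := by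
      rw [hcompat, S.g_symm X V]
    have horth : S.g (V - S.T V) X = 0 := by
      rw [S.g_symm]
      have := S.T_orth X V
      rw [hX] at this
      exact this
    have hsplit : S.g V X = S.g (S.T V) X + S.g (V - S.T V) X := by
      have hsum : S.T V + (V - S.T V) = V := by abel
      rw [← S.g_add_left, hsum]
    have hVX : S.g (S.T V) X = S.g V X := by
      rw [hsplit, horth, add_zero]
    rw [hVX]
    funext p
    have h1 : S.act X h p + S.act X h p = S.g V X p + S.g V X p := by
      have := congrFun hact p
      have := congrFun hgXV p
      simp only [Pi.add_apply] at *
      linarith [congrFun hact p, congrFun hgXV p]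
    linarith
  exact ⟨key, fun φ _ => ⟨fun p => (1 / 2) * S.g V V p, key⟩⟩
end

section
/- Let M be a minimal submanifold of dimension n in a Riemannian manifold (N, g̃) with concurrent vector field V, and suppose (M, g, V^T, φ) is a conformal soliton. Then φ ≡ 1. -/
/-! For a tangent field `X`, torsion-freeness and metric compatibility give
`(L_{V^T} g)(X,X) = 2 g(∇_X V^T, X)`. Differentiating `g(V, X) = g(V^T, X)` along `X` shows
that replacing `V^T` by `V` here costs exactly `g̃(h(X,X), V^⊥)`, and `∇_X V = X` for a
concurrent field. So `φ g(X,X) = g(X,X) + g̃(h(X,X), V^⊥)`; tracing over an orthonormal frame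
gives `n φ = n + n g̃(H, V^⊥) = n`. -/

namespace RiemannianVF

variable {M VF : Type*} [AddCommGroup VF] [Module ℝ VF] (R : RiemannianVF M VF)

def gAddHom (Z : VF) : VF →+ (M → ℝ) :=
  AddMonoidHom.mk' (R.g · Z) (R.g_add_left · · Z)

theorem g_zero_left (Z : VF) : R.g 0 Z = 0 :=
  map_zero (R.gAddHom Z)

theorem g_sub_left (X Y Z : VF) : R.g (X - Y) Z = R.g X Z - R.g Y Z :=
  map_sub (R.gAddHom Z) X Y

theorem g_sum_left {ι : Type*} (s : Finset ι) (Y : ι → VF) (Z : VF) :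
    R.g (∑ i ∈ s, Y i) Z = ∑ i ∈ s, R.g (Y i) Z :=
  map_sum (R.gAddHom Z) Y s

theorem g_add_right (X Y Z : VF) : R.g X (Y + Z) = R.g X Y + R.g X Z := by
  rw [R.g_symm, R.g_add_left, R.g_symm Y, R.g_symm Z]

theorem lieDeriv_self (v X : VF) : R.lieDeriv v X X = 2 * R.g (R.conn X v) X := by
  have hbracket : R.g (R.bracket v X) X = R.g (R.conn v X) X - R.g (R.conn X v) X := by
    rw [← R.torsion_free, R.g_sub_left]
  rw [lieDeriv, R.compat, R.g_symm X (R.bracket v X), R.g_symm X (R.conn v X), hbracket]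
  ring

end RiemannianVF

namespace SubmanifoldVF

variable {M VF : Type*} [AddCommGroup VF] [Module ℝ VF] (S : SubmanifoldVF M VF)

theorem tangent_add_nor (W : VF) : S.T W + S.nor W = W :=
  add_sub_cancel _ _

theorem secondFF_eq_nor_conn (X Y : VF) : S.secondFF X Y = S.nor (S.conn X Y) :=
  rfl

theorem g_nor_tangent (W Y : VF) : S.g (S.nor W) (S.T Y) = 0 := by
  rw [S.g_symm]
  exact S.T_orth Y W

theorem g_nor_eq_g_nor_nor (W Y : VF) : S.g (S.nor W) Y = S.g (S.nor W) (S.nor Y) := by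
  conv_lhs => rw [← S.tangent_add_nor Y]
  rw [S.g_add_right, S.g_nor_tangent, zero_add]

theorem g_eq_g_tangent_of_tangent {Y : VF} (hY : S.T Y = Y) (W : VF) :
    S.g W Y = S.g (S.T W) Y := by
  conv_lhs => rw [← S.tangent_add_nor W]
  rw [S.g_add_left, ← hY, S.g_nor_tangent, add_zero]

theorem g_conn_tangent_self {X : VF} (hX : S.T X = X) (W : VF) :
    S.g (S.conn X (S.T W)) X = S.g (S.conn X W) X + S.g (S.secondFF X X) (S.nor W) := by
  have hcompat : S.g (S.conn X W) X + S.g W (S.conn X X)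
      = S.g (S.conn X (S.T W)) X + S.g (S.T W) (S.conn X X) := by
    rw [← S.compat, ← S.compat, S.g_eq_g_tangent_of_tangent hX]
  have hsplit : S.g W (S.conn X X)
      = S.g (S.T W) (S.conn X X) + S.g (S.secondFF X X) (S.nor W) := by
    conv_lhs => rw [← S.tangent_add_nor W]
    rw [S.g_add_left, S.g_nor_eq_g_nor_nor, S.g_symm (S.nor W), S.secondFF_eq_nor_conn]
  linear_combination hcompat.symm + hsplit

variable {S} in
theorem IsConformalSoliton.mul_g_self {V : VF} {φ : M → ℝ}
    (hsol : S.IsConformalSoliton (S.T V) φ) {X : VF} (hX : S.T X = X) (p : M) :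
    φ p * S.g X X p = S.g (S.conn X V) X p + S.g (S.secondFF X X) (S.nor V) p := by
  have h := congrFun (hsol X X hX hX) p
  rw [S.lieDeriv_self, S.g_conn_tangent_self hX] at h
  simpa using h

end SubmanifoldVF

/-- a conformal soliton `(M, g, V^T, φ)` on a minimal submanifold of
dimension `n` of an ambient manifold with concurrent vector field `V` has `φ ≡ 1`. -/
theorem minimal_soliton_phi_eq_one {M VF : Type*} [AddCommGroup VF] [Module ℝ VF]
    (S : SubmanifoldVF M VF) (V : VF) (φ : M → ℝ) (n : ℕ) (hn : 1 ≤ n)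
    (e : Fin n → VF) (he : S.toRiemannianVF.IsONFrame e)
    (htang : ∀ i, S.T (e i) = e i)
    (hmin : ∑ i, S.secondFF (e i) (e i) = 0)
    (hV : ∀ X, S.T X = X → S.conn X V = X)
    (hsol : S.IsConformalSoliton (S.T V) φ) :
    ∀ p, φ p = 1 := by
  intro p
  have hframe : ∀ i, φ p = 1 + S.g (S.secondFF (e i) (e i)) (S.nor V) p := by
    intro i
    have h := hsol.mul_g_self (htang i) p
    rwa [hV _ (htang i), he i i, if_pos rfl, mul_one] at h
  have htrace : ∑ i, S.g (S.secondFF (e i) (e i)) (S.nor V) p = 0 := by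
    rw [← Finset.sum_apply, ← S.g_sum_left, hmin, S.g_zero_left, Pi.zero_apply]
  have hsum := Finset.sum_congr rfl fun i (_ : i ∈ Finset.univ) => hframe i
  rw [Finset.sum_add_distrib, htrace] at hsum
  simp only [Finset.sum_const, Finset.card_univ, Fintype.card_fin, nsmul_eq_mul] at hsum
  have hn' : (n : ℝ) ≠ 0 := by positivity
  exact (mul_right_inj' hn').mp (by linarith)
end

section
/- Let M be a submanifold of a Riemannian manifold (N, g̃) with a concurrent vector field V, and write V = V^T + V^⊥. Then for all vector fields X, Y tangent to M: (L_{V^T} g)(X,Y) = 2 g(X,Y) + 2 g(A_{V^⊥}(X), Y), where A_{V^⊥} is the shape operator in the direction V^⊥ and g the induced metric. -/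
section Aux

namespace SubmanifoldVF

variable {M VF : Type*} [AddCommGroup VF] [Module ℝ VF] (S : SubmanifoldVF M VF)

lemma g_zero_left' (Z : VF) : S.g 0 Z = 0 := by
  have h := S.g_smul_left 0 0 Z
  simpa using h

lemma g_neg_left' (X Z : VF) : S.g (-X) Z = - S.g X Z := by
  have h := S.g_smul_left (-1) X Z
  simpa using h

lemma g_sub_left' (X Y Z : VF) : S.g (X - Y) Z = S.g X Z - S.g Y Z := by
  have h := S.g_add_left (X - Y) Y Z
  rw [sub_add_cancel] at h
  exact eq_sub_of_add_eq h.symm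

lemma g_sub_right' (X Y Z : VF) : S.g X (Y - Z) = S.g X Y - S.g X Z := by
  rw [S.g_symm, g_sub_left', S.g_symm Y X, S.g_symm Z X]

lemma act_zero' (X : VF) : S.act X 0 = 0 := by
  have h := S.act_add X 0 0
  simpa using h

lemma conn_add_right' (X Y Z : VF) : S.conn X (Y + Z) = S.conn X Y + S.conn X Z := by
  have key : ∀ W, S.g (S.conn X (Y + Z) - (S.conn X Y + S.conn X Z)) W = 0 := by
    intro W
    have h1 := S.compat X (Y + Z) W
    have h2 := S.compat X Y W
    have h3 := S.compat X Z W
    rw [S.g_add_left Y Z W, S.act_add] at h1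
    have h4 : S.g (Y + Z) (S.conn X W) = S.g Y (S.conn X W) + S.g Z (S.conn X W) :=
      S.g_add_left _ _ _
    rw [h4] at h1
    have h5 : S.g (S.conn X (Y + Z)) W = S.g (S.conn X Y) W + S.g (S.conn X Z) W := by
      linear_combination h2 + h3 - h1
    rw [g_sub_left', S.g_add_left, h5]
    ring
  have h0 := S.nondeg _ key
  rw [sub_eq_zero] at h0
  exact h0

lemma conn_sub_right' (X Y Z : VF) : S.conn X (Y - Z) = S.conn X Y - S.conn X Z := by
  have h := S.conn_add_right' X (Y - Z) Z
  rw [sub_add_cancel] at h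
  exact eq_sub_of_add_eq h.symm

lemma tangent_nor' (X Z : VF) (hX : S.T X = X) : S.g X (S.nor Z) = 0 := by
  have h := S.T_orth X Z
  rw [hX] at h
  exact h

lemma nor_tangent' (X Z : VF) (hX : S.T X = X) : S.g (S.nor Z) X = 0 := by
  rw [S.g_symm]; exact S.tangent_nor' X Z hX

end SubmanifoldVF

end Aux

/-- for a submanifold of an ambient manifold with concurrent vector field
`V = V^T + V^⊥`, `(L_{V^T} g)(X,Y) = 2 g(X,Y) + 2 g(A_{V^⊥} X, Y)` for tangent `X, Y`. -/
theorem lieDeriv_tangential_concurrent {M VF : Type*} [AddCommGroup VF] [Module ℝ VF]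
    (S : SubmanifoldVF M VF) (V : VF)
    (hV : ∀ X, S.T X = X → S.conn X V = X) :
    ∀ X Y, S.T X = X → S.T Y = Y →
      ∀ p, S.toRiemannianVF.lieDeriv (S.T V) X Y p
        = 2 * S.g X Y p + 2 * S.g (S.shape (S.nor V) X) Y p := by
  intro X Y hX hY p
  set η := S.nor V with hη
  have hTV : S.T V = V - η := by
    rw [hη]; simp [SubmanifoldVF.nor]
  have hTVt : S.T (S.T V) = S.T V := S.T_proj V
  -- Weingarten: for tangent Z, W: g(shape η Z, W) = g(η, conn Z W)
  have shape_eq : ∀ Z W, S.T Z = Z → S.T W = W →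
      S.g (S.shape η Z) W = S.g η (S.conn Z W) := by
    intro Z W hZ hW
    have hc := S.compat Z η W
    have h0 : S.g η W = 0 := S.nor_tangent' W V hW
    rw [h0, S.act_zero'] at hc
    have hsplit : S.g (S.conn Z η) W = S.g (S.T (S.conn Z η)) W := by
      have hnor : S.g (S.nor (S.conn Z η)) W = 0 := S.nor_tangent' W _ hW
      have hs : S.g (S.conn Z η - S.T (S.conn Z η)) W
          = S.g (S.conn Z η) W - S.g (S.T (S.conn Z η)) W := S.g_sub_left' _ _ _
      have : S.nor (S.conn Z η) = S.conn Z η - S.T (S.conn Z η) := rfl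
      rw [this, hs] at hnor
      linear_combination hnor
    have hshape : S.g (S.shape η Z) W = - S.g (S.T (S.conn Z η)) W := by
      have : S.shape η Z = -(S.T (S.conn Z η)) := rfl
      rw [this, S.g_neg_left']
    rw [hshape, ← hsplit]
    linear_combination hc
  -- g(conn Z η, W) = - g(shape η Z, W) for tangent Z W
  have conn_eta : ∀ Z W, S.T Z = Z → S.T W = W →
      S.g (S.conn Z η) W = - S.g (S.shape η Z) W := by
    intro Z W hZ hW
    have hc := S.compat Z η W
    have h0 : S.g η W = 0 := S.nor_tangent' W V hW
    rw [h0, S.act_zero'] at hc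
    rw [shape_eq Z W hZ hW]
    linear_combination -hc
  -- key: g(conn Z (T V), W) = g Z W + g(shape η Z, W)
  have keyA : ∀ Z W, S.T Z = Z → S.T W = W →
      S.g (S.conn Z (S.T V)) W = S.g Z W + S.g (S.shape η Z) W := by
    intro Z W hZ hW
    rw [hTV, S.conn_sub_right', hV Z hZ, S.g_sub_left', conn_eta Z W hZ hW]
    ring
  -- symmetry of the shape operator
  have sym : S.g (S.shape η Y) X = S.g (S.shape η X) Y := by
    rw [shape_eq Y X hY hX, shape_eq X Y hX hY]
    have hb : S.g η (S.conn Y X) - S.g η (S.conn X Y)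
        = S.g η (S.conn Y X - S.conn X Y) := (S.g_sub_right' _ _ _).symm
    have ht : S.conn Y X - S.conn X Y = S.bracket Y X := S.torsion_free Y X
    have hbr : S.T (S.bracket Y X) = S.bracket Y X := S.bracket_tangent Y X hY hX
    have h0 : S.g η (S.bracket Y X) = 0 := by
      rw [S.g_symm]; exact S.tangent_nor' _ V hbr
    rw [ht, h0] at hb
    linear_combination hb
  -- bracket expansions
  have hb1 : S.g (S.bracket (S.T V) X) Y
      = S.g (S.conn (S.T V) X) Y - S.g (S.conn X (S.T V)) Y := by
    rw [← S.torsion_free, S.g_sub_left']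
  have hb2 : S.g X (S.bracket (S.T V) Y)
      = S.g (S.conn (S.T V) Y) X - S.g (S.conn Y (S.T V)) X := by
    rw [S.g_symm, ← S.torsion_free, S.g_sub_left']
  -- assemble at the point p
  have e1 := congrFun (S.compat (S.T V) X Y) p
  have e2 := congrFun hb1 p
  have e3 := congrFun hb2 p
  have e4 := congrFun (keyA X Y hX hY) p
  have e5 := congrFun (keyA Y X hY hX) p
  have e6 := congrFun sym p
  have e7 := congrFun (S.g_symm X (S.conn (S.T V) Y)) p
  have e8 := congrFun (S.g_symm Y X) p
  simp only [RiemannianVF.lieDeriv, Pi.sub_apply, Pi.add_apply] at *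
  linarith
end
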